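/- arXiv:1210.6370 — 9 statements merged into one kernel-verified Lean document; each statement's English description precedes it below -/
import Mathlib

section
/- Let β* ∈ (0,1), γ* > 0 with γ*β* < 1, let b > 0 (standing for f(β*)) and c > 0 (standing for f(γ*)), α ∈ (0,1), and set l = c·(1−γ*β*)/(γ*·(1+β*)) (leader utility) and φ = b·(1−γ*β*)/(β*·(1+γ*)) (follower utility before sensing cost). Then following is better than leading, i.e. (1−α)·φ > l, if and only if α < (b − c + b/β* − c/γ*)/(b·(1+β*)/β*). -/
/-! Both utilities share the positive factor `k = (1 - γβ) / ((1 + β)(1 + γ))`: the leader gets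
`k · c(1 + γ)/γ` and the follower `k · b(1 + β)/β`. Cancelling `k` compares `(1 - α) B` with `C`
for `B = b(1 + β)/β`, `C = c(1 + γ)/γ`, and `(B - C)/B` is exactly the stated threshold. -/

theorem lt_sub_div_self_iff {K : Type*} [Field K] [LinearOrder K] [IsStrictOrderedRing K]
    {a B C : K} (hB : 0 < B) : a < (B - C) / B ↔ C < (1 - a) * B := by
  rw [lt_div_iff₀ hB, sub_mul, one_mul]
  constructor <;> intro h <;> linarith

theorem stmt2_general (β γ b c α : ℝ) (hβ0 : 0 < β) (hγ : 0 < γ)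
    (hγβ : γ * β < 1) (hb : 0 < b)
    (l φ : ℝ) (hl : l = c * (1 - γ * β) / (γ * (1 + β)))
    (hφ : φ = b * (1 - γ * β) / (β * (1 + γ))) :
    (1 - α) * φ > l ↔ α < (b - c + b / β - c / γ) / (b * (1 + β) / β) := by
  set k := (1 - γ * β) / ((1 + β) * (1 + γ)) with hk_def
  have hk : 0 < k := div_pos (by linarith) (by positivity)
  have hB : 0 < b * (1 + β) / β := by positivity
  have hl' : l = k * (c * (1 + γ) / γ) := by rw [hl, hk_def]; field_simp
  have hφ' : φ = k * (b * (1 + β) / β) := by rw [hφ, hk_def]; field_simp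
  have hnum : b - c + b / β - c / γ = b * (1 + β) / β - c * (1 + γ) / γ := by
    field_simp; ring
  rw [hl', hφ', hnum, lt_sub_div_self_iff hB, gt_iff_lt,
    mul_left_comm, mul_lt_mul_iff_right₀ hk]

/-- Following is better than leading, `(1−α)·φ > l`, iff
`α < (b − c + b/β* − c/γ*)/(b·(1+β*)/β*)`. -/
theorem stmt2 (β γ b c α : ℝ) (hβ0 : 0 < β) (hβ1 : β < 1) (hγ : 0 < γ)
    (hγβ : γ * β < 1) (hb : 0 < b) (hc : 0 < c) (hα0 : 0 < α) (hα1 : α < 1)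
    (l φ : ℝ) (hl : l = c * (1 - γ * β) / (γ * (1 + β)))
    (hφ : φ = b * (1 - γ * β) / (β * (1 + γ))) :
    (1 - α) * φ > l ↔ α < (b - c + b / β - c / γ) / (b * (1 + β) / β) :=
  stmt2_general β γ b c α hβ0 hγ hγβ hb l φ hl hφ
end

section
/- In the two-player sensing game, assume additionally l > a (the leader utility strictly exceeds the Nash utility). Then the following are equivalent: (i) α < (β* − γ*)/(1 − β*γ*); (ii) the profiles (S,NS) and (NS,S) are pure Nash equilibria while (NS,NS) and (S,S) are not pure Nash equilibria (so the game has exactly the two asymmetric pure equilibria). -/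
inductive SenseAction
  | S
  | NS
  deriving DecidableEq

open SenseAction

/-- assuming l > a, α < (β*−γ*)/(1−β*γ*) iff (S,NS) and (NS,S) are pure
Nash equilibria while (NS,NS) and (S,S) are not. -/
theorem stmt3
    (β γ α R1 R2 g1 g2 σ2 b c : ℝ)
    (hβ0 : 0 < β) (hβ1 : β < 1) (hγ : 0 < γ) (hγβ : γ * β < 1)
    (hα0 : 0 < α) (hα1 : α < 1)
    (hR1 : 0 < R1) (hR2 : 0 < R2) (hg1 : 0 < g1) (hg2 : 0 < g2)
    (hσ : 0 < σ2) (hb : 0 < b) (hc : 0 < c)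
    (w1 w2 a l φ : ℝ)
    (hw1 : w1 = R1 * g1 / σ2) (hw2 : w2 = R2 * g2 / σ2)
    (ha : a = b * (1 - β) / β)
    (hl : l = c * (1 - γ * β) / (γ * (1 + β)))
    (hφ : φ = b * (1 - γ * β) / (β * (1 + γ)))
    (U1 U2 : SenseAction → SenseAction → ℝ)
    (hU1nn : U1 NS NS = w1 * a) (hU1ns : U1 NS S = w1 * l)
    (hU1sn : U1 S NS = w1 * ((1 - α) * φ)) (hU1ss : U1 S S = w1 * ((1 - α) * a))
    (hU2nn : U2 NS NS = w2 * a) (hU2ns : U2 NS S = w2 * ((1 - α) * φ))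
    (hU2sn : U2 S NS = w2 * l) (hU2ss : U2 S S = w2 * ((1 - α) * a))
    (hla : l > a)
    (isNE : SenseAction → SenseAction → Prop)
    (hNE : ∀ s1 s2, isNE s1 s2 ↔
      ((∀ t1, U1 t1 s2 ≤ U1 s1 s2) ∧ (∀ t2, U2 s1 t2 ≤ U2 s1 s2)))
    :
    α < (β - γ) / (1 - β * γ) ↔
      (isNE S NS ∧ isNE NS S ∧ ¬ isNE NS NS ∧ ¬ isNE S S) := by
  have hw1p : 0 < w1 := by rw [hw1]; positivity
  have hw2p : 0 < w2 := by rw [hw2]; positivity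
  have hβγ : 0 < 1 - β * γ := by nlinarith
  have hden : 0 < β * (1 + γ) := by positivity
  have ha0 : 0 < a := by
    rw [ha]; apply div_pos _ hβ0; nlinarith
  have haeq : a * (β * (1 + γ)) = b * (1 - β) * (1 + γ) := by
    rw [ha]; field_simp
  have hφ' : (1 - α) * φ = (1 - α) * (b * (1 - γ * β)) / (β * (1 + γ)) := by
    rw [hφ]; ring
  have key : α < (β - γ) / (1 - β * γ) ↔ a < (1 - α) * φ := by
    rw [lt_div_iff₀ hβγ, hφ', lt_div_iff₀ hden, haeq]
    constructor
    · intro h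
      have hint : 0 < b * (β - γ - α * (1 - β * γ)) :=
        mul_pos hb (by linarith only [h])
      linarith only [hint]
    · intro h
      by_contra hcon
      push_neg at hcon
      have hint : 0 ≤ b * (α * (1 - β * γ) - (β - γ)) :=
        mul_nonneg hb.le (by linarith only [hcon])
      linarith only [hint, h]
  have hlda : (1 - α) * a < l := by
    have h1 : 0 < α * a := mul_pos hα0 ha0
    linarith only [h1, hla]
  rw [key]
  constructor
  · intro hC
    refine ⟨?_, ?_, ?_, ?_⟩
    · rw [hNE]
      constructor
      · intro t1
        cases t1
        · exact le_refl _
        · rw [hU1nn, hU1sn]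
          exact mul_le_mul_of_nonneg_left hC.le hw1p.le
      · intro t2
        cases t2
        · rw [hU2ss, hU2sn]
          exact mul_le_mul_of_nonneg_left hlda.le hw2p.le
        · exact le_refl _
    · rw [hNE]
      constructor
      · intro t1
        cases t1
        · rw [hU1ss, hU1ns]
          exact mul_le_mul_of_nonneg_left hlda.le hw1p.le
        · exact le_refl _
      · intro t2
        cases t2
        · exact le_refl _
        · rw [hU2nn, hU2ns]
          exact mul_le_mul_of_nonneg_left hC.le hw2p.le
    · rw [hNE]
      rintro ⟨h1, _⟩
      have := h1 S
      rw [hU1sn, hU1nn] at this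
      have := mul_lt_mul_of_pos_left hC hw1p
      linarith
    · rw [hNE]
      rintro ⟨h1, _⟩
      have := h1 NS
      rw [hU1ns, hU1ss] at this
      have h2 : w1 * ((1 - α) * a) < w1 * l :=
        mul_lt_mul_of_pos_left hlda hw1p
      linarith
  · rintro ⟨_, _, hnn, _⟩
    by_contra hC
    push_neg at hC
    apply hnn
    rw [hNE]
    constructor
    · intro t1
      cases t1
      · rw [hU1sn, hU1nn]
        exact mul_le_mul_of_nonneg_left hC hw1p.le
      · exact le_refl _
    · intro t2
      cases t2
      · rw [hU2ns, hU2nn]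
        exact mul_le_mul_of_nonneg_left hC hw2p.le
      · exact le_refl _
end

section
/- In the two-player sensing game, assume additionally l > a. If α > (β* − γ*)/(1 − β*γ*), then for each player the action S is strictly dominated by NS (i.e., against each action of the other player, playing NS yields a strictly larger utility than playing S), and consequently (NS,NS) is the unique pure Nash equilibrium of the game. -/
open SenseAction

/-- assuming l > a, if α > (β*−γ*)/(1−β*γ*) then S is strictly dominated
by NS for each player, and (NS,NS) is the unique pure Nash equilibrium. -/
theorem stmt4
    (β γ α R1 R2 g1 g2 σ2 b c : ℝ)
    (hβ0 : 0 < β) (hβ1 : β < 1) (hγ : 0 < γ) (hγβ : γ * β < 1)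
    (hα0 : 0 < α) (hα1 : α < 1)
    (hR1 : 0 < R1) (hR2 : 0 < R2) (hg1 : 0 < g1) (hg2 : 0 < g2)
    (hσ : 0 < σ2) (hb : 0 < b) (hc : 0 < c)
    (w1 w2 a l φ : ℝ)
    (hw1 : w1 = R1 * g1 / σ2) (hw2 : w2 = R2 * g2 / σ2)
    (ha : a = b * (1 - β) / β)
    (hl : l = c * (1 - γ * β) / (γ * (1 + β)))
    (hφ : φ = b * (1 - γ * β) / (β * (1 + γ)))
    (U1 U2 : SenseAction → SenseAction → ℝ)
    (hU1nn : U1 NS NS = w1 * a) (hU1ns : U1 NS S = w1 * l)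
    (hU1sn : U1 S NS = w1 * ((1 - α) * φ)) (hU1ss : U1 S S = w1 * ((1 - α) * a))
    (hU2nn : U2 NS NS = w2 * a) (hU2ns : U2 NS S = w2 * ((1 - α) * φ))
    (hU2sn : U2 S NS = w2 * l) (hU2ss : U2 S S = w2 * ((1 - α) * a))
    (hla : l > a)
    (isNE : SenseAction → SenseAction → Prop)
    (hNE : ∀ s1 s2, isNE s1 s2 ↔
      ((∀ t1, U1 t1 s2 ≤ U1 s1 s2) ∧ (∀ t2, U2 s1 t2 ≤ U2 s1 s2)))
    (hα : α > (β - γ) / (1 - β * γ)) :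
    (∀ s2, U1 S s2 < U1 NS s2) ∧
    (∀ s1, U2 s1 S < U2 s1 NS) ∧
    isNE NS NS ∧
    (∀ s1 s2, isNE s1 s2 → s1 = NS ∧ s2 = NS) := by
  have hd : 0 < 1 - β * γ := by nlinarith
  have hkey : β - γ < α * (1 - β * γ) := (div_lt_iff₀ hd).mp hα
  have hw1p : 0 < w1 := by rw [hw1]; positivity
  have hw2p : 0 < w2 := by rw [hw2]; positivity
  have hap : 0 < a := by
    rw [ha]; exact div_pos (mul_pos hb (by linarith)) hβ0
  have key1 : (1 - α) * φ < a := by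
    have e : (1 - α) * φ = ((1 - α) * (b * (1 - γ * β))) / (β * (1 + γ)) := by
      rw [hφ]; ring
    rw [e, ha, div_lt_div_iff₀ (by positivity) hβ0]
    nlinarith [mul_pos hβ0 (mul_pos hb (sub_pos.mpr hkey))]
  have key2 : (1 - α) * a < l := by nlinarith
  have h1 : ∀ s2, U1 S s2 < U1 NS s2 := by
    intro s2; cases s2
    · rw [hU1ss, hU1ns]; exact mul_lt_mul_of_pos_left key2 hw1p
    · rw [hU1sn, hU1nn]; exact mul_lt_mul_of_pos_left key1 hw1p
  have h2 : ∀ s1, U2 s1 S < U2 s1 NS := by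
    intro s1; cases s1
    · rw [hU2ss, hU2sn]; exact mul_lt_mul_of_pos_left key2 hw2p
    · rw [hU2ns, hU2nn]; exact mul_lt_mul_of_pos_left key1 hw2p
  refine ⟨h1, h2, ?_, ?_⟩
  · rw [hNE]
    refine ⟨fun t1 => ?_, fun t2 => ?_⟩
    · cases t1
      · exact (h1 NS).le
      · exact le_rfl
    · cases t2
      · exact (h2 NS).le
      · exact le_rfl
  · intro s1 s2 h
    rw [hNE] at h
    cases s1
    · exact absurd (h.1 NS) (not_le.mpr (h1 s2))
    · cases s2
      · exact absurd (h.2 NS) (not_le.mpr (h2 NS))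
      · exact ⟨rfl, rfl⟩
end

section
/- In the two-player sensing game, assume additionally l > a. If α = (β* − γ*)/(1 − β*γ*), then (NS,NS), (NS,S) and (S,NS) are all pure Nash equilibria; moreover, for every x ∈ [0,1] the mixed profile in which player 1 plays S with probability x and player 2 plays NS with probability 1 is a mixed Nash equilibrium (and symmetrically with the roles of players 1 and 2 exchanged), so the game has infinitely many equilibria. -/
open SenseAction

/-- assuming l > a, if α = (β*−γ*)/(1−β*γ*) then (NS,NS), (NS,S), (S,NS)
are pure Nash equilibria, and for every x ∈ [0,1] the mixed profile where player 1 plays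
S with probability x and player 2 plays NS with probability 1 is a mixed Nash equilibrium
(and symmetrically), so there are infinitely many equilibria. Here `mixedNE y₁ y₂` refers
to the mixed profile in which player i plays NS with probability `yᵢ`. -/
theorem stmt5
    (β γ α R1 R2 g1 g2 σ2 b c : ℝ)
    (hβ0 : 0 < β) (hβ1 : β < 1) (hγ : 0 < γ) (hγβ : γ * β < 1)
    (hα0 : 0 < α) (hα1 : α < 1)
    (hR1 : 0 < R1) (hR2 : 0 < R2) (hg1 : 0 < g1) (hg2 : 0 < g2)
    (hσ : 0 < σ2) (hb : 0 < b) (hc : 0 < c)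
    (w1 w2 a l φ : ℝ)
    (hw1 : w1 = R1 * g1 / σ2) (hw2 : w2 = R2 * g2 / σ2)
    (ha : a = b * (1 - β) / β)
    (hl : l = c * (1 - γ * β) / (γ * (1 + β)))
    (hφ : φ = b * (1 - γ * β) / (β * (1 + γ)))
    (U1 U2 : SenseAction → SenseAction → ℝ)
    (hU1nn : U1 NS NS = w1 * a) (hU1ns : U1 NS S = w1 * l)
    (hU1sn : U1 S NS = w1 * ((1 - α) * φ)) (hU1ss : U1 S S = w1 * ((1 - α) * a))
    (hU2nn : U2 NS NS = w2 * a) (hU2ns : U2 NS S = w2 * ((1 - α) * φ))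
    (hU2sn : U2 S NS = w2 * l) (hU2ss : U2 S S = w2 * ((1 - α) * a))
    (hla : l > a)
    (isNE : SenseAction → SenseAction → Prop)
    (hNE : ∀ s1 s2, isNE s1 s2 ↔
      ((∀ t1, U1 t1 s2 ≤ U1 s1 s2) ∧ (∀ t2, U2 s1 t2 ≤ U2 s1 s2)))
    (EU1 EU2 : ℝ → ℝ → ℝ)
    (hEU1 : ∀ x y, EU1 x y = x * (y * U1 NS NS + (1 - y) * U1 NS S)
        + (1 - x) * (y * U1 S NS + (1 - y) * U1 S S))
    (hEU2 : ∀ x y, EU2 x y = y * (x * U2 NS NS + (1 - x) * U2 S NS)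
        + (1 - y) * (x * U2 NS S + (1 - x) * U2 S S))
    (mixedNE : ℝ → ℝ → Prop)
    (hmixedNE : ∀ x y, mixedNE x y ↔
      ((∀ x', 0 ≤ x' → x' ≤ 1 → EU1 x' y ≤ EU1 x y) ∧
       (∀ y', 0 ≤ y' → y' ≤ 1 → EU2 x y' ≤ EU2 x y)))
    (hα : α = (β - γ) / (1 - β * γ)) :
    isNE NS NS ∧ isNE NS S ∧ isNE S NS ∧
    (∀ x : ℝ, 0 ≤ x → x ≤ 1 → mixedNE (1 - x) 1) ∧
    (∀ x : ℝ, 0 ≤ x → x ≤ 1 → mixedNE 1 (1 - x)) := by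
  have hβγ : 1 - β * γ > 0 := by nlinarith
  have hkey : (1 - α) * φ = a := by
    rw [hα, hφ, ha]
    field_simp
    ring
  have hw1p : 0 < w1 := by rw [hw1]; positivity
  have hw2p : 0 < w2 := by rw [hw2]; positivity
  have hap : 0 < a := by
    rw [ha]; apply div_pos _ hβ0; nlinarith
  have h1a : (1 - α) * a < a := by nlinarith
  have h1al : (1 - α) * a < l := lt_trans h1a hla
  have hmm1 : w1 * ((1 - α) * a) ≤ w1 * l := mul_le_mul_of_nonneg_left h1al.le hw1p.le
  have hmm2 : w2 * ((1 - α) * a) ≤ w2 * l := mul_le_mul_of_nonneg_left h1al.le hw2p.le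
  refine ⟨?_, ?_, ?_, ?_, ?_⟩
  · rw [hNE]
    refine ⟨fun t1 => ?_, fun t2 => ?_⟩
    · cases t1 <;> simp [hU1nn, hU1sn, hkey]
    · cases t2 <;> simp [hU2nn, hU2ns, hkey]
  · rw [hNE]
    refine ⟨fun t1 => ?_, fun t2 => ?_⟩
    · cases t1 <;> simp [hU1ns, hU1ss, hmm1]
    · cases t2 <;> simp [hU2ns, hU2nn, hkey]
  · rw [hNE]
    refine ⟨fun t1 => ?_, fun t2 => ?_⟩
    · cases t1 <;> simp [hU1sn, hU1nn, hkey]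
    · cases t2 <;> simp [hU2sn, hU2ss, hmm2]
  · intro x hx0 hx1
    rw [hmixedNE]
    refine ⟨fun x' _ _ => ?_, fun y' hy0 hy1 => ?_⟩
    · apply le_of_eq
      rw [hEU1, hEU1, hU1nn, hU1ns, hU1sn, hU1ss, hkey]
      ring
    · have hdiff : EU2 (1 - x) 1 - EU2 (1 - x) y'
          = ((1 - y') * x) * (w2 * (l - (1 - α) * a)) := by
        rw [hEU2, hEU2, hU2nn, hU2ns, hU2sn, hU2ss, hkey]; ring
      have hnn : 0 ≤ ((1 - y') * x) * (w2 * (l - (1 - α) * a)) :=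
        mul_nonneg (mul_nonneg (by linarith) hx0)
          (mul_pos hw2p (sub_pos.2 h1al)).le
      linarith
  · intro x hx0 hx1
    rw [hmixedNE]
    refine ⟨fun x' hx'0 hx'1 => ?_, fun y' _ _ => ?_⟩
    · have hdiff : EU1 1 (1 - x) - EU1 x' (1 - x)
          = ((1 - x') * x) * (w1 * (l - (1 - α) * a)) := by
        rw [hEU1, hEU1, hU1nn, hU1ns, hU1sn, hU1ss, hkey]; ring
      have hnn : 0 ≤ ((1 - x') * x) * (w1 * (l - (1 - α) * a)) :=
        mul_nonneg (mul_nonneg (by linarith) hx0)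
          (mul_pos hw1p (sub_pos.2 h1al)).le
      linarith
    · apply le_of_eq
      rw [hEU2, hEU2, hU2nn, hU2ns, hU2sn, hU2ss, hkey]
      ring
end

section
/- In the two-player sensing game, assume additionally l > a and α < (β* − γ*)/(1 − β*γ*), and let D = (1−α)a − l + a − (1−α)φ and y* = ((1−α)a − l)/D. Then at the completely mixed equilibrium where each player plays NS with probability y*, the expected utility of player i equals (R_i g_i/σ²)·Δ, where Δ = ((1−α)·a² − (1−α)·l·φ)/D; concretely, a·y* + l·(1−y*) = (1−α)·(φ·y* + a·(1−y*)) = Δ. -/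
open SenseAction

/-! At y* the leader's payoff a·y + l·(1 − y) and the sensing follower's payoff
(1 − α)(φ·y + a·(1 − y)) are equal, so every mixed strategy of a player earns the same
payoff w_i·Δ against y*. The only analytic input is D ≠ 0: both summands of D are
negative, (1 − α)a − l because l > a, and a − (1 − α)φ because the bound on α is exactly
(1 − β*)(1 + γ*) < (1 − α)(1 − γ*β*). -/

/-- Payoffs `A, L` (first action) and `F, B` (second action) against an opponent playing the
first action with probability `y`; this `y` makes both actions equally good. -/
theorem indifference_value {A L F B D y : ℝ} (hD : D = B - L + A - F) (hD0 : D ≠ 0)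
    (hy : y = (B - L) / D) :
    A * y + L * (1 - y) = (A * B - L * F) / D ∧ F * y + B * (1 - y) = (A * B - L * F) / D := by
  subst hD hy
  constructor <;> · field_simp; ring

theorem mixed_payoff_eq_of_indifferent {A L F B y Δ : ℝ} (x w : ℝ)
    (hfirst : A * y + L * (1 - y) = Δ) (hsecond : F * y + B * (1 - y) = Δ) :
    x * (y * (w * A) + (1 - y) * (w * L)) + (1 - x) * (y * (w * F) + (1 - y) * (w * B))
      = w * Δ := by
  linear_combination (x * w) * hfirst + ((1 - x) * w) * hsecond

theorem nash_utility_pos {β b : ℝ} (hβ0 : 0 < β) (hβ1 : β < 1) (hb : 0 < b) :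
    0 < b * (1 - β) / β :=
  div_pos (mul_pos hb (sub_pos.mpr hβ1)) hβ0

theorem nash_utility_lt_follower_utility {β γ α b : ℝ} (hβ0 : 0 < β) (hγ : 0 < γ)
    (hγβ : γ * β < 1) (hb : 0 < b) (hα : α < (β - γ) / (1 - β * γ)) :
    b * (1 - β) / β < (1 - α) * (b * (1 - γ * β) / (β * (1 + γ))) := by
  have hαβγ : 0 < β - γ - α * (1 - β * γ) := by
    rw [lt_div_iff₀ (by linarith)] at hα
    linarith
  have hgap : (1 - α) * (b * (1 - γ * β) / (β * (1 + γ))) - b * (1 - β) / β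
      = b * (β - γ - α * (1 - β * γ)) / (β * (1 + γ)) := by
    field_simp
    ring
  rw [← sub_pos, hgap]
  exact div_pos (mul_pos hb hαβγ) (by positivity)

theorem stmt7_general
    (β γ α R1 R2 g1 g2 σ2 b : ℝ)
    (hβ0 : 0 < β) (hβ1 : β < 1) (hγ : 0 < γ) (hγβ : γ * β < 1)
    (hα0 : 0 < α)
    (hb : 0 < b)
    (w1 w2 a l φ : ℝ)
    (hw1 : w1 = R1 * g1 / σ2) (hw2 : w2 = R2 * g2 / σ2)
    (ha : a = b * (1 - β) / β)
    (hφ : φ = b * (1 - γ * β) / (β * (1 + γ)))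
    (U1 U2 : SenseAction → SenseAction → ℝ)
    (hU1nn : U1 NS NS = w1 * a) (hU1ns : U1 NS S = w1 * l)
    (hU1sn : U1 S NS = w1 * ((1 - α) * φ)) (hU1ss : U1 S S = w1 * ((1 - α) * a))
    (hU2nn : U2 NS NS = w2 * a) (hU2ns : U2 NS S = w2 * ((1 - α) * φ))
    (hU2sn : U2 S NS = w2 * l) (hU2ss : U2 S S = w2 * ((1 - α) * a))
    (hla : l > a)
    (EU1 EU2 : ℝ → ℝ → ℝ)
    (hEU1 : ∀ x y, EU1 x y = x * (y * U1 NS NS + (1 - y) * U1 NS S)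
        + (1 - x) * (y * U1 S NS + (1 - y) * U1 S S))
    (hEU2 : ∀ x y, EU2 x y = y * (x * U2 NS NS + (1 - x) * U2 S NS)
        + (1 - y) * (x * U2 NS S + (1 - x) * U2 S S))
    (hα : α < (β - γ) / (1 - β * γ))
    (D ystar Δ : ℝ)
    (hD : D = (1 - α) * a - l + a - (1 - α) * φ)
    (hy : ystar = ((1 - α) * a - l) / D)
    (hΔ : Δ = ((1 - α) * a ^ 2 - (1 - α) * l * φ) / D) :
    a * ystar + l * (1 - ystar) = Δ ∧
    (1 - α) * (φ * ystar + a * (1 - ystar)) = Δ ∧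
    EU1 ystar ystar = R1 * g1 / σ2 * Δ ∧
    EU2 ystar ystar = R2 * g2 / σ2 * Δ := by
  have ha0 : 0 < a := ha ▸ nash_utility_pos hβ0 hβ1 hb
  have haφ : a < (1 - α) * φ := ha ▸ hφ ▸ nash_utility_lt_follower_utility hβ0 hγ hγβ hb hα
  have hD0 : D ≠ 0 := by
    rw [hD]
    linarith [mul_pos hα0 ha0]
  have hΔ' : Δ = (a * ((1 - α) * a) - l * ((1 - α) * φ)) / D := by rw [hΔ]; ring
  obtain ⟨hleader, hfollower⟩ := hΔ' ▸ indifference_value hD hD0 hy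
  have hfollower' : (1 - α) * (φ * ystar + a * (1 - ystar)) = Δ := by
    rw [← hfollower]; ring
  refine ⟨hleader, hfollower', ?_, ?_⟩
  · rw [hEU1, hU1nn, hU1ns, hU1sn, hU1ss, ← hw1]
    exact mixed_payoff_eq_of_indifferent ystar w1 hleader hfollower
  · rw [hEU2, hU2nn, hU2ns, hU2sn, hU2ss, ← hw2]
    exact mixed_payoff_eq_of_indifferent ystar w2 hleader hfollower

/-- assuming l > a and α < (β*−γ*)/(1−β*γ*), at the completely mixed
equilibrium where each player plays NS with probability y* = ((1−α)a − l)/D,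
D = (1−α)a − l + a − (1−α)φ, the expected utility of player i is (R_i g_i/σ²)·Δ with
Δ = ((1−α)a² − (1−α)lφ)/D; concretely a·y* + l·(1−y*) = (1−α)(φ·y* + a·(1−y*)) = Δ. -/
theorem stmt7
    (β γ α R1 R2 g1 g2 σ2 b c : ℝ)
    (hβ0 : 0 < β) (hβ1 : β < 1) (hγ : 0 < γ) (hγβ : γ * β < 1)
    (hα0 : 0 < α) (hα1 : α < 1)
    (hR1 : 0 < R1) (hR2 : 0 < R2) (hg1 : 0 < g1) (hg2 : 0 < g2)
    (hσ : 0 < σ2) (hb : 0 < b) (hc : 0 < c)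
    (w1 w2 a l φ : ℝ)
    (hw1 : w1 = R1 * g1 / σ2) (hw2 : w2 = R2 * g2 / σ2)
    (ha : a = b * (1 - β) / β)
    (hl : l = c * (1 - γ * β) / (γ * (1 + β)))
    (hφ : φ = b * (1 - γ * β) / (β * (1 + γ)))
    (U1 U2 : SenseAction → SenseAction → ℝ)
    (hU1nn : U1 NS NS = w1 * a) (hU1ns : U1 NS S = w1 * l)
    (hU1sn : U1 S NS = w1 * ((1 - α) * φ)) (hU1ss : U1 S S = w1 * ((1 - α) * a))
    (hU2nn : U2 NS NS = w2 * a) (hU2ns : U2 NS S = w2 * ((1 - α) * φ))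
    (hU2sn : U2 S NS = w2 * l) (hU2ss : U2 S S = w2 * ((1 - α) * a))
    (hla : l > a)
    (EU1 EU2 : ℝ → ℝ → ℝ)
    (hEU1 : ∀ x y, EU1 x y = x * (y * U1 NS NS + (1 - y) * U1 NS S)
        + (1 - x) * (y * U1 S NS + (1 - y) * U1 S S))
    (hEU2 : ∀ x y, EU2 x y = y * (x * U2 NS NS + (1 - x) * U2 S NS)
        + (1 - y) * (x * U2 NS S + (1 - x) * U2 S S))
    (mixedNE : ℝ → ℝ → Prop)
    (hmixedNE : ∀ x y, mixedNE x y ↔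
      ((∀ x', 0 ≤ x' → x' ≤ 1 → EU1 x' y ≤ EU1 x y) ∧
       (∀ y', 0 ≤ y' → y' ≤ 1 → EU2 x y' ≤ EU2 x y)))
    (hα : α < (β - γ) / (1 - β * γ))
    (D ystar Δ : ℝ)
    (hD : D = (1 - α) * a - l + a - (1 - α) * φ)
    (hy : ystar = ((1 - α) * a - l) / D)
    (hΔ : Δ = ((1 - α) * a ^ 2 - (1 - α) * l * φ) / D) :
    a * ystar + l * (1 - ystar) = Δ ∧
    (1 - α) * (φ * ystar + a * (1 - ystar)) = Δ ∧
    EU1 ystar ystar = R1 * g1 / σ2 * Δ ∧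
    EU2 ystar ystar = R2 * g2 / σ2 * Δ :=
  stmt7_general β γ α R1 R2 g1 g2 σ2 b hβ0 hβ1 hγ hγβ hα0 hb w1 w2 a l φ hw1 hw2 ha hφ U1 U2 hU1nn
    hU1ns hU1sn hU1ss hU2nn hU2ns hU2sn hU2ss hla EU1 EU2 hEU1 hEU2 hα D ystar Δ hD hy hΔ
end

section
/- The two-player sensing game is a weighted potential game with weight vector w_i = R_i g_i/σ²: there exists a function V : {S,NS} × {S,NS} → ℝ such that for every player i, every pair of own actions s_i, t_i ∈ {S,NS} and every action s_{−i} of the other player, U_i(s_i, s_{−i}) − U_i(t_i, s_{−i}) = w_i · (V(s_i, s_{−i}) − V(t_i, s_{−i})). -/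
open SenseAction

/-- the two-player sensing game is a weighted potential game with weights
w_i = R_i g_i/σ²: there is V with U_i(s_i,s_{−i}) − U_i(t_i,s_{−i})
= w_i·(V(s_i,s_{−i}) − V(t_i,s_{−i})). -/
theorem stmt8
    (β γ α R1 R2 g1 g2 σ2 b c : ℝ)
    (hβ0 : 0 < β) (hβ1 : β < 1) (hγ : 0 < γ) (hγβ : γ * β < 1)
    (hα0 : 0 < α) (hα1 : α < 1)
    (hR1 : 0 < R1) (hR2 : 0 < R2) (hg1 : 0 < g1) (hg2 : 0 < g2)
    (hσ : 0 < σ2) (hb : 0 < b) (hc : 0 < c)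
    (w1 w2 a l φ : ℝ)
    (hw1 : w1 = R1 * g1 / σ2) (hw2 : w2 = R2 * g2 / σ2)
    (ha : a = b * (1 - β) / β)
    (hl : l = c * (1 - γ * β) / (γ * (1 + β)))
    (hφ : φ = b * (1 - γ * β) / (β * (1 + γ)))
    (U1 U2 : SenseAction → SenseAction → ℝ)
    (hU1nn : U1 NS NS = w1 * a) (hU1ns : U1 NS S = w1 * l)
    (hU1sn : U1 S NS = w1 * ((1 - α) * φ)) (hU1ss : U1 S S = w1 * ((1 - α) * a))
    (hU2nn : U2 NS NS = w2 * a) (hU2ns : U2 NS S = w2 * ((1 - α) * φ))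
    (hU2sn : U2 S NS = w2 * l) (hU2ss : U2 S S = w2 * ((1 - α) * a))
    :
    ∃ V : SenseAction → SenseAction → ℝ,
      (∀ s1 t1 s2, U1 s1 s2 - U1 t1 s2 = w1 * (V s1 s2 - V t1 s2)) ∧
      (∀ s1 s2 t2, U2 s1 s2 - U2 s1 t2 = w2 * (V s1 s2 - V s1 t2)) := by
  refine ⟨fun s1 s2 => match s1, s2 with
    | NS, NS => 0
    | S, NS => (1 - α) * φ - a
    | NS, S => (1 - α) * φ - a
    | S, S => (1 - α) * φ - a + ((1 - α) * a - l), ?_, ?_⟩ <;>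
  · intro x y z
    cases x <;> cases y <;> cases z <;>
      simp [hU1nn, hU1ns, hU1sn, hU1ss, hU2nn, hU2ns, hU2sn, hU2ss] <;> ring
end

section
/- In the two-player sensing game, the game admits an exact potential (a function V : {S,NS}² → ℝ with U_i(s_i,s_{−i}) − U_i(t_i,s_{−i}) = V(s_i,s_{−i}) − V(t_i,s_{−i}) for every player i and all actions) if and only if R₁g₁ = R₂g₂ or (1−α)·φ + l − a − (1−α)·a = 0. -/
open SenseAction

/-- the two-player sensing game admits an exact potential iff
R₁g₁ = R₂g₂ or (1−α)·φ + l − a − (1−α)·a = 0. -/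
theorem stmt10
    (β γ α R1 R2 g1 g2 σ2 b c : ℝ)
    (hβ0 : 0 < β) (hβ1 : β < 1) (hγ : 0 < γ) (hγβ : γ * β < 1)
    (hα0 : 0 < α) (hα1 : α < 1)
    (hR1 : 0 < R1) (hR2 : 0 < R2) (hg1 : 0 < g1) (hg2 : 0 < g2)
    (hσ : 0 < σ2) (hb : 0 < b) (hc : 0 < c)
    (w1 w2 a l φ : ℝ)
    (hw1 : w1 = R1 * g1 / σ2) (hw2 : w2 = R2 * g2 / σ2)
    (ha : a = b * (1 - β) / β)
    (hl : l = c * (1 - γ * β) / (γ * (1 + β)))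
    (hφ : φ = b * (1 - γ * β) / (β * (1 + γ)))
    (U1 U2 : SenseAction → SenseAction → ℝ)
    (hU1nn : U1 NS NS = w1 * a) (hU1ns : U1 NS S = w1 * l)
    (hU1sn : U1 S NS = w1 * ((1 - α) * φ)) (hU1ss : U1 S S = w1 * ((1 - α) * a))
    (hU2nn : U2 NS NS = w2 * a) (hU2ns : U2 NS S = w2 * ((1 - α) * φ))
    (hU2sn : U2 S NS = w2 * l) (hU2ss : U2 S S = w2 * ((1 - α) * a))
    :
    (∃ V : SenseAction → SenseAction → ℝ,
        (∀ s1 t1 s2, U1 s1 s2 - U1 t1 s2 = V s1 s2 - V t1 s2) ∧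
        (∀ s1 s2 t2, U2 s1 s2 - U2 s1 t2 = V s1 s2 - V s1 t2)) ↔
      (R1 * g1 = R2 * g2 ∨ (1 - α) * φ + l - a - (1 - α) * a = 0) := by
  constructor
  · rintro ⟨V, h1, h2⟩
    have e1 := h1 S NS NS
    have e2 := h2 S S NS
    have e3 := h1 NS S S
    have e4 := h2 NS NS S
    rw [hU1sn, hU1nn] at e1
    rw [hU2ss, hU2sn] at e2
    rw [hU1ns, hU1ss] at e3
    rw [hU2nn, hU2ns] at e4
    have key : (w1 - w2) * ((1 - α) * φ + l - a - (1 - α) * a) = 0 := by nlinarith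
    rcases mul_eq_zero.mp key with h | h
    · left
      have hw : w1 = w2 := by linarith
      rw [hw1, hw2] at hw
      have : R1 * g1 / σ2 * σ2 = R2 * g2 / σ2 * σ2 := by rw [hw]
      field_simp at this
      linarith
    · right; linarith
  · intro h
    refine ⟨fun s1 s2 => match s1, s2 with
      | NS, NS => 0
      | S, NS => w1 * ((1 - α) * φ - a)
      | NS, S => w2 * ((1 - α) * φ - a)
      | S, S => w1 * ((1 - α) * φ - a) + w2 * ((1 - α) * a - l), ?_, ?_⟩
    · intro s1 t1 s2
      have hw : w1 = w2 ∨ (1 - α) * φ - a = (1 - α) * a - l := by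
        rcases h with h | h
        · left; rw [hw1, hw2, h]
        · right; linarith
      have key : (w1 - w2) * ((1 - α) * φ - a) = (w1 - w2) * ((1 - α) * a - l) := by
        rcases hw with hw | hw
        · rw [hw]; ring
        · rw [hw]
      cases s1 <;> cases t1 <;> cases s2 <;>
        simp only [hU1nn, hU1ns, hU1sn, hU1ss] <;>
        first
          | ring1
          | linear_combination key
          | linear_combination -key
    · intro s1 s2 t2
      cases s1 <;> cases s2 <;> cases t2 <;>
        simp only [hU2nn, hU2ns, hU2sn, hU2ss] <;> ring
end

section
/- Let G be a finite normal-form game: a finite set of players N with at least two elements, for each i ∈ N a finite nonempty strategy set S_i, and utility functions u_i : ∏_{j∈N} S_j → ℝ. Then G admits an exact potential (a function V : ∏_j S_j → ℝ with u_i(s_i, s_{−i}) − u_i(t_i, s_{−i}) = V(s_i, s_{−i}) − V(t_i, s_{−i}) for every i, all s_i, t_i ∈ S_i and all s_{−i}) if and only if for every pair of distinct players i, j, all s_i, t_i ∈ S_i, all s_j, t_j ∈ S_j and every profile s_k of the remaining players: u_i(t_i,s_j,s_k) − u_i(s_i,s_j,s_k) + u_i(s_i,t_j,s_k) − u_i(t_i,t_j,s_k)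 + u_j(t_i,t_j,s_k) − u_j(t_i,s_j,s_k) + u_j(s_i,s_j,s_k) − u_j(s_i,t_j,s_k) = 0. -/
/-- Monderer–Shapley: a finite normal-form game with at least two players
admits an exact potential iff the four-cycle condition holds for every pair of distinct
players. -/
theorem stmt11 {ι : Type*} [Fintype ι] [DecidableEq ι] (h2 : 2 ≤ Fintype.card ι)
    (S : ι → Type*) [∀ i, Fintype (S i)] [∀ i, Nonempty (S i)]
    (u : ι → (∀ j, S j) → ℝ) :
    (∃ V : (∀ j, S j) → ℝ, ∀ (i : ι) (s : ∀ j, S j) (ti : S i),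
        u i s - u i (Function.update s i ti) = V s - V (Function.update s i ti)) ↔
      (∀ i j : ι, i ≠ j → ∀ (s : ∀ k, S k) (ti : S i) (tj : S j),
        u i (Function.update s i ti) - u i s
          + u i (Function.update s j tj)
          - u i (Function.update (Function.update s i ti) j tj)
          + u j (Function.update (Function.update s i ti) j tj)
          - u j (Function.update s i ti)
          + u j s - u j (Function.update s j tj) = 0) := by
  classical
  constructor
  · rintro ⟨V, hV⟩ i j hij s ti tj
    have h1 := hV i s ti
    have hb := hV j s tj
    have h3 := hV i (Function.update s j tj) ti
    have h4 := hV j (Function.update s i ti) tj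
    rw [Function.update_comm hij.symm] at h3
    linarith
  · intro hc
    have hn0 : 0 < Fintype.card ι := by omega
    set n := Fintype.card ι with hn
    let e : Fin n ≃ ι := (Fintype.equivFin ι).symm
    let r : ι → ℕ := fun j => (e.symm j : ℕ)
    have hr_lt : ∀ j, r j < n := fun j => (e.symm j).isLt
    let E : ℕ → ι := fun k => e ⟨k % n, Nat.mod_lt _ hn0⟩
    have hEr : ∀ j, E (r j) = j := by
      intro j
      show e ⟨r j % n, _⟩ = j
      have hmod : r j % n = r j := Nat.mod_eq_of_lt (hr_lt j)
      have : (⟨r j % n, Nat.mod_lt _ hn0⟩ : Fin n) = e.symm j := by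
        ext; simp [hmod, r]
      rw [this, Equiv.apply_symm_apply]
    have hrE : ∀ k, k < n → r (E k) = k := by
      intro k hk
      show ((e.symm (e ⟨k % n, _⟩)) : ℕ) = k
      rw [Equiv.symm_apply_apply]
      simp [Nat.mod_eq_of_lt hk]
    have b : ∀ j, S j := fun j => Classical.arbitrary _
    let p : ℕ → (∀ j, S j) → (∀ j, S j) := fun k s j => if r j < k then s j else b j
    have hp0 : ∀ s, p 0 s = b := by intro s; funext j; simp [p]
    have hpn : ∀ s, p n s = s := by intro s; funext j; simp [p, hr_lt j]
    have hpu_lt : ∀ k s (i : ι) (t : S i), r i < k →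
        p k (Function.update s i t) = Function.update (p k s) i t := by
      intro k s i t h
      funext j
      by_cases hj : j = i
      · subst hj; simp [p, h]
      · simp [p, Function.update_of_ne hj]
    have hpu_ge : ∀ k s (i : ι) (t : S i), ¬ r i < k →
        p k (Function.update s i t) = p k s := by
      intro k s i t h
      funext j
      by_cases hj : j = i
      · subst hj; simp [p, h]
      · simp [p, Function.update_of_ne hj]
    have hps : ∀ k, k < n → ∀ s, p (k+1) s = Function.update (p k s) (E k) (s (E k)) := by
      intro k hk s
      funext j
      by_cases hj : j = E k
      · subst hj
        simp [p, hrE k hk]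
      · have hrj : r j ≠ k := by
          intro h
          exact hj (by rw [← h, hEr j])
        rw [Function.update_of_ne hj]
        show (if r j < k+1 then s j else b j) = (if r j < k then s j else b j)
        have hiff : r j < k + 1 ↔ r j < k := by omega
        simp [hiff]
    refine ⟨fun s => ∑ k ∈ Finset.range n, (u (E k) (p (k+1) s) - u (E k) (p k s)), ?_⟩
    intro i s t
    set s' := Function.update s i t with hs'
    set D : ℕ → ℝ := fun k => u i (p k s) - u i (p k s') with hD
    have key : ∀ k ∈ Finset.range n,
        (u (E k) (p (k+1) s) - u (E k) (p k s))
          - (u (E k) (p (k+1) s') - u (E k) (p k s')) = D (k+1) - D k := by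
      intro k hk
      rw [Finset.mem_range] at hk
      rcases lt_trichotomy k (r i) with hlt | heq | hgt
      · have h1 : p k s' = p k s := hpu_ge k s i t (by omega)
        have h2' : p (k+1) s' = p (k+1) s := hpu_ge (k+1) s i t (by omega)
        simp [hD, h1, h2']
      · have h1 : p k s' = p k s := hpu_ge k s i t (by omega)
        have h2' : p (k+1) s' = Function.update (p (k+1) s) i t :=
          hpu_lt (k+1) s i t (by omega)
        have hEk : E k = i := by rw [heq, hEr]
        rw [hEk, h1, h2']
        simp only [hD, h1, h2']
        ring
      · have h1 : p k s' = Function.update (p k s) i t := hpu_lt k s i t hgt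
        have h2' : p (k+1) s' = Function.update (p (k+1) s) i t :=
          hpu_lt (k+1) s i t (by omega)
        have hne : i ≠ E k := by
          intro h
          have hki := hrE k hk
          rw [← h] at hki
          omega
        have hcyc := hc i (E k) hne (p k s) t (s (E k))
        have e1 : Function.update (p k s) (E k) (s (E k)) = p (k+1) s := (hps k hk s).symm
        have e2 : Function.update (Function.update (p k s) i t) (E k) (s (E k))
            = Function.update (p (k+1) s) i t := by
          rw [Function.update_comm hne, e1]
        rw [e2, e1, ← h1, ← h2'] at hcyc
        simp only [hD]
        linarith
    have hsum :
        (∑ k ∈ Finset.range n, (u (E k) (p (k+1) s) - u (E k) (p k s)))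
          - (∑ k ∈ Finset.range n, (u (E k) (p (k+1) s') - u (E k) (p k s')))
          = D n - D 0 := by
      rw [← Finset.sum_sub_distrib, Finset.sum_congr rfl key, Finset.sum_range_sub D n]
    have hD0 : D 0 = 0 := by simp [hD, hp0]
    have hDn : D n = u i s - u i s' := by simp [hD, hpn]
    rw [hsum, hD0, hDn]
    ring
end

section
/- Consider the two-player hybrid power control and sensing game with utilities u_i = (1 − α·𝟙[d_i = S]) · R_i f(SINR_i)/p_i on action sets {S,NS} × (0,∞), where SINR_i = p_i g_i/(p_j g_j + σ²), α ∈ (0,1), R_i, g_i, σ² > 0, f(x) > 0 for x > 0. Suppose β* ∈ (0,1) is the strict maximizer of f(x)/x on (0,∞), i.e., f(x)/x < f(β*)/β* for all x > 0 with x ≠ β*. Then the hybrid game has a unique pure Nash equilibrium, namely ((NS, p₁*), (NS, p₂*)) with p_i* = (σ²/g_i)·β*/(1−β*), which is exactly the Nash equilibrium of the power control game without sensing. -/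
open SenseAction

/-! Whatever the opponent does, a player faces a fixed interference-plus-noise level `D`, and its
utility without sensing is `R (g / D) · f(x) / x` with `x = p g / D` its SINR. Hence the unique best
response is not to sense and to transmit at the power `β* D / g` that makes the SINR equal to `β*`;
sensing only multiplies a positive utility by `1 - α < 1`. A pure equilibrium is thus a solution of
`p₁ g₁ = β* (p₂ g₂ + σ²)`, `p₂ g₂ = β* (p₁ g₁ + σ²)`, which forces `p₁ g₁ = p₂ g₂ = σ² β* / (1 - β*)`. -/

/-- `D` stands for the interference-plus-noise level `p_j g_j + σ²` created by the opponent. -/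
noncomputable def hybridUtility (f : ℝ → ℝ) (α R g D : ℝ) (a : SenseAction × ℝ) : ℝ :=
  (1 - α * (if a.1 = S then 1 else 0)) * (R * f (a.2 * g / D) / a.2)

section BestResponse

variable {f : ℝ → ℝ} {α R g D β : ℝ}

theorem hybridUtility_NS {p : ℝ} (hp : p ≠ 0) (hg : g ≠ 0) (hD : D ≠ 0) :
    hybridUtility f α R g D (NS, p) = R * (g / D) * (f (p * g / D) / (p * g / D)) := by
  simp only [hybridUtility, reduceCtorEq, if_false, mul_zero, sub_zero, one_mul]
  field_simp

theorem hybridUtility_S_lt_NS (hα : 0 < α) (hR : 0 < R) (hg : 0 < g) (hD : 0 < D)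
    (hf : ∀ x, 0 < x → 0 < f x) {p : ℝ} (hp : 0 < p) :
    hybridUtility f α R g D (S, p) < hybridUtility f α R g D (NS, p) := by
  have hfp := hf (p * g / D) (by positivity)
  simp only [hybridUtility, if_true, reduceCtorEq, if_false, mul_one, mul_zero, sub_zero, one_mul]
  exact mul_lt_of_lt_one_left (by positivity) (by linarith)

theorem hybridUtility_NS_lt (hR : 0 < R) (hg : 0 < g) (hD : 0 < D) (hβ : 0 < β)
    (hmax : ∀ x, 0 < x → x ≠ β → f x / x < f β / β) {p : ℝ} (hp : 0 < p) (hne : p ≠ β * D / g) :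
    hybridUtility f α R g D (NS, p) < hybridUtility f α R g D (NS, β * D / g) := by
  have hsinr : p * g / D ≠ β := by
    contrapose! hne
    field_simp
    linarith [(div_eq_iff hD.ne').1 hne]
  rw [hybridUtility_NS hp.ne' hg.ne' hD.ne', hybridUtility_NS (by positivity) hg.ne' hD.ne',
    show β * D / g * g / D = β by field_simp]
  exact mul_lt_mul_of_pos_left (hmax _ (by positivity) hsinr) (by positivity)

theorem hybridUtility_lt_of_ne (hα : 0 < α) (hR : 0 < R) (hg : 0 < g) (hD : 0 < D) (hβ : 0 < β)
    (hf : ∀ x, 0 < x → 0 < f x) (hmax : ∀ x, 0 < x → x ≠ β → f x / x < f β / β)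
    {a : SenseAction × ℝ} (ha : 0 < a.2) (hne : a ≠ (NS, β * D / g)) :
    hybridUtility f α R g D a < hybridUtility f α R g D (NS, β * D / g) := by
  obtain ⟨d, p⟩ := a
  cases d with
  | S =>
    calc hybridUtility f α R g D (S, p) < hybridUtility f α R g D (NS, p) :=
          hybridUtility_S_lt_NS hα hR hg hD hf ha
      _ ≤ hybridUtility f α R g D (NS, β * D / g) := by
          rcases eq_or_ne p (β * D / g) with rfl | hp
          · exact le_rfl
          · exact (hybridUtility_NS_lt hR hg hD hβ hmax ha hp).le
  | NS => exact hybridUtility_NS_lt hR hg hD hβ hmax ha fun hp => hne (hp ▸ rfl)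

theorem isBestResponse_hybridUtility_iff (hα : 0 < α) (hR : 0 < R) (hg : 0 < g) (hD : 0 < D)
    (hβ : 0 < β) (hf : ∀ x, 0 < x → 0 < f x) (hmax : ∀ x, 0 < x → x ≠ β → f x / x < f β / β)
    {a : SenseAction × ℝ} (ha : 0 < a.2) :
    (∀ b : SenseAction × ℝ, 0 < b.2 → hybridUtility f α R g D b ≤ hybridUtility f α R g D a) ↔
      a = (NS, β * D / g) := by
  constructor
  · intro hbest
    by_contra hne
    exact (hybridUtility_lt_of_ne hα hR hg hD hβ hf hmax ha hne).not_ge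
      (hbest _ (show 0 < β * D / g by positivity))
  · rintro rfl b hb
    rcases eq_or_ne b (NS, β * D / g) with rfl | hne
    · exact le_rfl
    · exact (hybridUtility_lt_of_ne hα hR hg hD hβ hf hmax hb hne).le

end BestResponse

/-- At `β = 1` both sides are false: the right one because `1 / 0 = 0` in Lean. -/
theorem eq_mul_add_self_iff {q β σ : ℝ} (hq : q ≠ 0) (hσ : σ ≠ 0) :
    q = β * (q + σ) ↔ q = σ * (β / (1 - β)) := by
  rcases eq_or_ne β 1 with rfl | hβ
  · simp [hq, hσ]
  · have : 1 - β ≠ 0 := sub_ne_zero.2 hβ.symm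
    rw [mul_div_assoc', eq_div_iff this]
    constructor <;> intro h <;> linarith

theorem powerControl_nash_iff {g₁ g₂ σ β p₁ p₂ : ℝ} (hg₁ : 0 < g₁) (hg₂ : 0 < g₂) (hσ : 0 < σ)
    (hβ : 0 < β) (hp₁ : 0 < p₁) (hp₂ : 0 < p₂) :
    (p₁ = β * (p₂ * g₂ + σ) / g₁ ∧ p₂ = β * (p₁ * g₁ + σ) / g₂) ↔
      (p₁ = σ / g₁ * (β / (1 - β)) ∧ p₂ = σ / g₂ * (β / (1 - β))) := by
  simp only [div_mul_eq_mul_div _ _ (β / (1 - β)), eq_div_iff hg₁.ne', eq_div_iff hg₂.ne']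
  have hq₁ : p₁ * g₁ ≠ 0 := by positivity
  have hq₂ : p₂ * g₂ ≠ 0 := by positivity
  generalize p₁ * g₁ = q₁ at hq₁ ⊢
  generalize p₂ * g₂ = q₂ at hq₂ ⊢
  constructor
  · rintro ⟨h₁, h₂⟩
    have h₁₂ : q₁ = q₂ := by nlinarith
    subst h₁₂
    exact ⟨(eq_mul_add_self_iff hq₁ hσ.ne').1 h₁, (eq_mul_add_self_iff hq₁ hσ.ne').1 h₁⟩
  · rintro ⟨h₁, h₂⟩
    obtain rfl : q₁ = q₂ := h₁.trans h₂.symm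
    exact ⟨(eq_mul_add_self_iff hq₁ hσ.ne').2 h₁, (eq_mul_add_self_iff hq₁ hσ.ne').2 h₁⟩

theorem stmt16_general (α R1 R2 g1 g2 σ2 β : ℝ)
    (hα0 : 0 < α) (hR1 : 0 < R1) (hR2 : 0 < R2)
    (hg1 : 0 < g1) (hg2 : 0 < g2) (hσ : 0 < σ2)
    (hβ0 : 0 < β)
    (f : ℝ → ℝ) (hf : ∀ x : ℝ, 0 < x → 0 < f x)
    (hmax : ∀ x : ℝ, 0 < x → x ≠ β → f x / x < f β / β)
    (u1 u2 : SenseAction × ℝ → SenseAction × ℝ → ℝ)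
    (hu1 : ∀ a1 a2, u1 a1 a2 =
      (1 - α * (if a1.1 = S then 1 else 0))
        * (R1 * f (a1.2 * g1 / (a2.2 * g2 + σ2)) / a1.2))
    (hu2 : ∀ a1 a2, u2 a1 a2 =
      (1 - α * (if a2.1 = S then 1 else 0))
        * (R2 * f (a2.2 * g2 / (a1.2 * g1 + σ2)) / a2.2))
    (p1s p2s : ℝ)
    (hp1 : p1s = σ2 / g1 * (β / (1 - β)))
    (hp2 : p2s = σ2 / g2 * (β / (1 - β))) :
    ∀ a1 a2 : SenseAction × ℝ, 0 < a1.2 → 0 < a2.2 →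
      (((∀ b1 : SenseAction × ℝ, 0 < b1.2 → u1 b1 a2 ≤ u1 a1 a2) ∧
        (∀ b2 : SenseAction × ℝ, 0 < b2.2 → u2 a1 b2 ≤ u2 a1 a2)) ↔
        (a1 = (NS, p1s) ∧ a2 = (NS, p2s))) := by
  rintro ⟨d1, p1⟩ ⟨d2, p2⟩ (hp1pos : 0 < p1) (hp2pos : 0 < p2)
  have best1 : (∀ b1 : SenseAction × ℝ, 0 < b1.2 → u1 b1 (d2, p2) ≤ u1 (d1, p1) (d2, p2)) ↔
      (d1, p1) = (NS, β * (p2 * g2 + σ2) / g1) := by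
    simp only [hu1]
    exact isBestResponse_hybridUtility_iff (D := p2 * g2 + σ2) (a := (d1, p1))
      hα0 hR1 hg1 (by positivity) hβ0 hf hmax hp1pos
  have best2 : (∀ b2 : SenseAction × ℝ, 0 < b2.2 → u2 (d1, p1) b2 ≤ u2 (d1, p1) (d2, p2)) ↔
      (d2, p2) = (NS, β * (p1 * g1 + σ2) / g2) := by
    simp only [hu2]
    exact isBestResponse_hybridUtility_iff (D := p1 * g1 + σ2) (a := (d2, p2))
      hα0 hR2 hg2 (by positivity) hβ0 hf hmax hp2pos
  rw [best1, best2, hp1, hp2]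
  simp only [Prod.mk.injEq]
  rw [and_and_and_comm, powerControl_nash_iff hg1 hg2 hσ hβ0 hp1pos hp2pos, and_and_and_comm]

/-- if β* ∈ (0,1) is the strict maximizer of f(x)/x on (0,∞), the
two-player hybrid power control and sensing game has exactly one pure Nash equilibrium,
namely ((NS,p₁*),(NS,p₂*)) with p_i* = (σ²/g_i)·β*/(1−β*), i.e. the Nash equilibrium of
the power control game without sensing. -/
theorem stmt16 (α R1 R2 g1 g2 σ2 β : ℝ)
    (hα0 : 0 < α) (hα1 : α < 1) (hR1 : 0 < R1) (hR2 : 0 < R2)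
    (hg1 : 0 < g1) (hg2 : 0 < g2) (hσ : 0 < σ2)
    (hβ0 : 0 < β) (hβ1 : β < 1)
    (f : ℝ → ℝ) (hf : ∀ x : ℝ, 0 < x → 0 < f x)
    (hmax : ∀ x : ℝ, 0 < x → x ≠ β → f x / x < f β / β)
    (u1 u2 : SenseAction × ℝ → SenseAction × ℝ → ℝ)
    (hu1 : ∀ a1 a2, u1 a1 a2 =
      (1 - α * (if a1.1 = S then 1 else 0))
        * (R1 * f (a1.2 * g1 / (a2.2 * g2 + σ2)) / a1.2))
    (hu2 : ∀ a1 a2, u2 a1 a2 =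
      (1 - α * (if a2.1 = S then 1 else 0))
        * (R2 * f (a2.2 * g2 / (a1.2 * g1 + σ2)) / a2.2))
    (p1s p2s : ℝ)
    (hp1 : p1s = σ2 / g1 * (β / (1 - β)))
    (hp2 : p2s = σ2 / g2 * (β / (1 - β))) :
    ∀ a1 a2 : SenseAction × ℝ, 0 < a1.2 → 0 < a2.2 →
      (((∀ b1 : SenseAction × ℝ, 0 < b1.2 → u1 b1 a2 ≤ u1 a1 a2) ∧
        (∀ b2 : SenseAction × ℝ, 0 < b2.2 → u2 a1 b2 ≤ u2 a1 a2)) ↔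
        (a1 = (NS, p1s) ∧ a2 = (NS, p2s))) :=
  stmt16_general α R1 R2 g1 g2 σ2 β hα0 hR1 hR2 hg1 hg2 hσ hβ0 f hf hmax u1 u2 hu1 hu2 p1s p2s hp1
    hp2
end
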